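/- arXiv:1701.00745 — 5 statements merged into one kernel-verified Lean document; each statement's English description precedes it below -/
import Mathlib

section
/- Let F : ℝⁿ → ℝⁿ be Lipschitz continuous with constant β ≥ 0 and bounded with ‖F(y)‖ ≤ M for all y ∈ ℝⁿ. Let h > 0 and let x : [0, h] → ℝⁿ be differentiable with x'(s) = F(x(s)) for all s ∈ [0, h]. Then ‖x(h) − x(0) − ∫₀ʰ F(x(0) + (s/h)(x(h) − x(0))) ds‖ ≤ β²·M·h³/12. -/
open Set intervalIntegral

/-!
Since `x h - x 0 = ∫₀ʰ F (x s) ds`, the error is `∫₀ʰ (F (x s) - F (σ s)) ds` with `σ` the secant,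
hence at most `β ∫₀ʰ ‖x s - σ s‖ ds`. As `‖x'‖ ≤ M`, the velocity `s ↦ F (x s)` is `βM`-Lipschitz,
and for a curve with `L`-Lipschitz velocity the distance to its secant at time `s` is at most
`L s (h - s) / 2`: compare `x s` with its first-order Taylor expansions at `s` seen from `0` and
from `h`. Integrating, the error is at most `β · βM/2 · h³/6 = β²Mh³/12`.
-/

variable {E E' : Type*} [NormedAddCommGroup E] [NormedSpace ℝ E] [NormedAddCommGroup E']

theorem integral_mul_sub_self (h : ℝ) : ∫ s in (0 : ℝ)..h, s * (h - s) = h ^ 3 / 6 := by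
  simp only [mul_sub]
  rw [integral_sub ((by fun_prop : Continuous fun s : ℝ => s * h).intervalIntegrable _ _)
    ((by fun_prop : Continuous fun s : ℝ => s * s).intervalIntegrable _ _), integral_mul_const,
    integral_id]
  simp only [← pow_two, integral_pow]
  ring

theorem norm_integral_sub_left_le {v : ℝ → E} {a b L : ℝ} (hab : a ≤ b)
    (hL : ∀ t ∈ Icc a b, ‖v t - v a‖ ≤ L * |t - a|) :
    ‖∫ t in a..b, (v t - v a)‖ ≤ L * (b - a) ^ 2 / 2 := by
  calc ‖∫ t in a..b, (v t - v a)‖ ≤ ∫ t in a..b, L * (t - a) := by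
        refine norm_integral_le_of_norm_le hab (Filter.Eventually.of_forall fun t ht => ?_)
          ((by fun_prop : Continuous _).intervalIntegrable _ _)
        simpa [abs_of_nonneg (sub_nonneg.2 ht.1.le)] using hL t (Ioc_subset_Icc_self ht)
    _ = L * (b - a) ^ 2 / 2 := by
        rw [integral_const_mul, integral_comp_sub_right (fun t => t), integral_id]
        ring

theorem norm_integral_sub_right_le {v : ℝ → E} {a b L : ℝ} (hab : a ≤ b)
    (hL : ∀ t ∈ Icc a b, ‖v t - v b‖ ≤ L * |t - b|) :
    ‖∫ t in a..b, (v t - v b)‖ ≤ L * (b - a) ^ 2 / 2 := by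
  calc ‖∫ t in a..b, (v t - v b)‖ ≤ ∫ t in a..b, L * (b - t) := by
        refine norm_integral_le_of_norm_le hab (Filter.Eventually.of_forall fun t ht => ?_)
          ((by fun_prop : Continuous _).intervalIntegrable _ _)
        simpa [abs_of_nonpos (sub_nonpos.2 ht.2), neg_sub] using hL t (Ioc_subset_Icc_self ht)
    _ = L * (b - a) ^ 2 / 2 := by
        rw [integral_const_mul, integral_comp_sub_left (fun t => t), integral_id]
        ring

theorem integral_eq_sub_of_hasDerivWithinAt_Icc [CompleteSpace E] {x v : ℝ → E} {a b c d : ℝ}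
    (hx : ∀ s ∈ Icc a b, HasDerivWithinAt x (v s) (Icc a b) s) (hv : ContinuousOn v (Icc a b))
    (hac : a ≤ c) (hcd : c ≤ d) (hdb : d ≤ b) :
    ∫ t in c..d, v t = x d - x c := by
  have hsub : Icc c d ⊆ Icc a b := Icc_subset_Icc hac hdb
  refine integral_eq_sub_of_hasDeriv_right_of_le hcd
    (fun s hs => (hx s (hsub hs)).continuousWithinAt.mono hsub) (fun s hs => ?_)
    ((hv.mono hsub).intervalIntegrable_of_Icc hcd)
  have hs' : s ∈ Ioo a b := ⟨hac.trans_lt hs.1, hs.2.trans_le hdb⟩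
  exact ((hx s (Ioo_subset_Icc_self hs')).hasDerivAt (Icc_mem_nhds hs'.1 hs'.2)).hasDerivWithinAt

theorem norm_sub_secant_le [CompleteSpace E] {x v : ℝ → E} {h L : ℝ} (hh : 0 < h)
    (hx : ∀ s ∈ Icc 0 h, HasDerivWithinAt x (v s) (Icc 0 h) s) (hv : ContinuousOn v (Icc 0 h))
    (hL : ∀ s ∈ Icc 0 h, ∀ t ∈ Icc 0 h, ‖v t - v s‖ ≤ L * |t - s|)
    {s : ℝ} (hs : s ∈ Icc 0 h) :
    ‖x s - x 0 - (s / h) • (x h - x 0)‖ ≤ L * (s * (h - s)) / 2 := by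
  obtain ⟨hs0, hsh⟩ := hs
  have hvs : ∀ {c d}, 0 ≤ c → c ≤ d → d ≤ h →
      ∫ t in c..d, (v t - v s) = x d - x c - (d - c) • v s := fun hc hcd hd => by
    rw [integral_sub ((hv.mono (Icc_subset_Icc hc hd)).intervalIntegrable_of_Icc hcd)
      intervalIntegrable_const, integral_const,
      integral_eq_sub_of_hasDerivWithinAt_Icc hx hv hc hcd hd]
  have hbefore : ‖x s - x 0 - s • v s‖ ≤ L * s ^ 2 / 2 := by
    simpa [hvs le_rfl hs0 hsh] using norm_integral_sub_right_le hs0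
      fun t ht => hL s ⟨hs0, hsh⟩ t ⟨ht.1, ht.2.trans hsh⟩
  have hafter : ‖x h - x s - (h - s) • v s‖ ≤ L * (h - s) ^ 2 / 2 := by
    simpa [hvs hs0 hsh le_rfl] using norm_integral_sub_left_le hsh
      fun t ht => hL s ⟨hs0, hsh⟩ t ⟨hs0.trans ht.1, ht.2⟩
  -- the terms in `v s` cancel, leaving a convex combination of the two one-sided Taylor remainders
  have hsplit : h • (x s - x 0 - (s / h) • (x h - x 0)) =
      (h - s) • (x s - x 0 - s • v s) - s • (x h - x s - (h - s) • v s) := by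
    rw [smul_sub h, smul_smul, mul_div_cancel₀ s hh.ne']
    module
  have hscaled : h * ‖x s - x 0 - (s / h) • (x h - x 0)‖ ≤ h * (L * (s * (h - s)) / 2) := by
    calc h * ‖x s - x 0 - (s / h) • (x h - x 0)‖
        = ‖(h - s) • (x s - x 0 - s • v s) - s • (x h - x s - (h - s) • v s)‖ := by
          rw [← hsplit, norm_smul, Real.norm_of_nonneg hh.le]
      _ ≤ (h - s) * ‖x s - x 0 - s • v s‖ + s * ‖x h - x s - (h - s) • v s‖ := by
          refine (norm_sub_le _ _).trans_eq ?_
          rw [norm_smul, norm_smul, Real.norm_of_nonneg (sub_nonneg.2 hsh), Real.norm_of_nonneg hs0]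
      _ ≤ (h - s) * (L * s ^ 2 / 2) + s * (L * (h - s) ^ 2 / 2) := by
          gcongr
      _ = h * (L * (s * (h - s)) / 2) := by ring
  exact le_of_mul_le_mul_left hscaled hh

theorem norm_comp_sub_le_of_hasDerivWithinAt {F : E → E'} {x x' : ℝ → E} {s : Set ℝ}
    {β M : ℝ}
    (hs : Convex ℝ s) (hβ : 0 ≤ β) (hF : ∀ y z, ‖F y - F z‖ ≤ β * ‖y - z‖)
    (hx : ∀ t ∈ s, HasDerivWithinAt x (x' t) s t) (hM : ∀ t ∈ s, ‖x' t‖ ≤ M)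
    {t u : ℝ} (ht : t ∈ s) (hu : u ∈ s) :
    ‖F (x u) - F (x t)‖ ≤ β * M * |u - t| :=
  calc ‖F (x u) - F (x t)‖ ≤ β * ‖x u - x t‖ := hF _ _
    _ ≤ β * (M * ‖u - t‖) := by
      gcongr
      exact hs.norm_image_sub_le_of_norm_hasDerivWithin_le hx hM ht hu
    _ = β * M * |u - t| := by rw [Real.norm_eq_abs, mul_assoc]

/-- replacing the exact trajectory by its secant in the integral form
of the ODE introduces only a third-order error. -/
theorem stmt_4 (n : ℕ) (F : (Fin n → ℝ) → (Fin n → ℝ)) (β M : ℝ)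
    (hβ : 0 ≤ β) (hlip : ∀ y z : Fin n → ℝ, ‖F y - F z‖ ≤ β * ‖y - z‖)
    (hbdd : ∀ y : Fin n → ℝ, ‖F y‖ ≤ M)
    (h : ℝ) (hh : 0 < h) (x : ℝ → (Fin n → ℝ))
    (hderiv : ∀ s ∈ Icc (0 : ℝ) h, HasDerivWithinAt x (F (x s)) (Icc (0 : ℝ) h) s) :
    ‖x h - x 0 - ∫ s in (0 : ℝ)..h, F (x 0 + (s / h) • (x h - x 0))‖ ≤
      β ^ 2 * M * h ^ 3 / 12 := by
  have hF : Continuous F :=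
    (LipschitzWith.of_dist_le' fun y z => by simpa only [dist_eq_norm] using hlip y z).continuous
  have hv : ContinuousOn (fun s => F (x s)) (Icc 0 h) :=
    hF.comp_continuousOn fun s hs => (hderiv s hs).continuousWithinAt
  have hvL : ∀ s ∈ Icc 0 h, ∀ t ∈ Icc 0 h, ‖F (x t) - F (x s)‖ ≤ β * M * |t - s| :=
    fun s hs t ht => norm_comp_sub_le_of_hasDerivWithinAt (convex_Icc 0 h) hβ hlip hderiv
      (fun _ _ => hbdd _) hs ht
  have hsecant : Continuous fun s => F (x 0 + (s / h) • (x h - x 0)) := by fun_prop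
  have hdefect : x h - x 0 - ∫ s in (0 : ℝ)..h, F (x 0 + (s / h) • (x h - x 0)) =
      ∫ s in (0 : ℝ)..h, (F (x s) - F (x 0 + (s / h) • (x h - x 0))) := by
    rw [integral_sub (hv.intervalIntegrable_of_Icc hh.le) (hsecant.intervalIntegrable _ _),
      integral_eq_sub_of_hasDerivWithinAt_Icc hderiv hv le_rfl hh.le le_rfl]
  rw [hdefect]
  calc ‖∫ s in (0 : ℝ)..h, (F (x s) - F (x 0 + (s / h) • (x h - x 0)))‖
      ≤ ∫ s in (0 : ℝ)..h, β * (β * M * (s * (h - s)) / 2) := by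
        refine norm_integral_le_of_norm_le hh.le (Filter.Eventually.of_forall fun s hs => ?_)
          ((by fun_prop : Continuous _).intervalIntegrable _ _)
        refine (hlip _ _).trans (mul_le_mul_of_nonneg_left ?_ hβ)
        rw [← sub_sub]
        exact norm_sub_secant_le hh hderiv hv hvL (Ioc_subset_Icc_self hs)
    _ = β ^ 2 * M * h ^ 3 / 12 := by
        simp only [integral_const_mul, integral_div, integral_mul_sub_self]
        ring
end

section
/- Let d be a natural number, H : ℝᵈ → ℝ continuously differentiable with gradient ∇H, J a skew-symmetric d×d real matrix (Jᵀ = −J), h a real number, and let x̌, x̂ ∈ ℝᵈ satisfy the average vector field relation x̂ − x̌ = h·∫₀¹ J·∇H((1−s)·x̌ + s·x̂) ds. Then H(x̂) = H(x̌). -/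
open Set intervalIntegral RealInnerProductSpace

/-- the average vector field (AVF) method is energy preserving on
Hamiltonian systems `ẋ = J∇H(x)` with `J` skew-symmetric. -/
theorem stmt_5 (d : ℕ) (H : EuclideanSpace ℝ (Fin d) → ℝ)
    (hH : ContDiff ℝ 1 H)
    (J : Matrix (Fin d) (Fin d) ℝ) (hJ : J.transpose = -J)
    (h : ℝ) (xc xh : EuclideanSpace ℝ (Fin d))
    (hstep : xh - xc =
      h • ∫ s in (0 : ℝ)..1,
        Matrix.toEuclideanLin J (gradient H ((1 - s) • xc + s • xh))) :
    H xh = H xc := by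
  haveI : Fact True := ⟨trivial⟩
  let E := EuclideanSpace ℝ (Fin d)
  set γ : ℝ → E := fun s => (1 - s) • xc + s • xh with hγdef
  set w : E := xh - xc with hw
  set g : ℝ → E := fun s => gradient H (γ s) with hg
  -- γ has derivative w
  have hγ : ∀ s : ℝ, HasDerivAt γ w s := by
    intro s
    have h1 : HasDerivAt (fun s : ℝ => (1 - s) • xc) ((-1 : ℝ) • xc) s := by
      have : HasDerivAt (fun s : ℝ => 1 - s) (-1) s := by
        simpa using ((hasDerivAt_id s).const_sub 1)
      exact this.smul_const xc
    have h2 : HasDerivAt (fun s : ℝ => s • xh) ((1 : ℝ) • xh) s :=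
      (hasDerivAt_id s).smul_const xh
    have hval : xh - xc = (-1 : ℝ) • xc + (1 : ℝ) • xh := by module
    rw [hw, hval]
    exact h1.add h2
  -- gradient is continuous
  have hgradcont : Continuous (gradient H) := by
    have hf : Continuous (fderiv ℝ H) := hH.continuous_fderiv one_ne_zero
    have : Continuous fun x => (InnerProductSpace.toDual ℝ E).symm (fderiv ℝ H x) :=
      (InnerProductSpace.toDual ℝ E).symm.continuous.comp hf
    exact this
  have hγcont : Continuous γ := by fun_prop
  have hgcont : Continuous g := hgradcont.comp hγcont
  -- key derivative of H ∘ γ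
  have hderiv : ∀ s : ℝ, HasDerivAt (fun t => H (γ t)) ((inner ℝ (g s) w : ℝ)) s := by
    intro s
    have hHd : HasGradientAt H (gradient H (γ s)) (γ s) :=
      (hH.differentiable one_ne_zero (γ s)).hasGradientAt
    have := hHd.hasFDerivAt.comp_hasDerivAt s (hγ s)
    exact this
  have hint : IntervalIntegrable (fun s => (inner ℝ (g s) w : ℝ)) MeasureTheory.volume 0 1 :=
    (hgcont.inner continuous_const).intervalIntegrable 0 1
  have hftc : ∫ s in (0:ℝ)..1, (inner ℝ (g s) w : ℝ) = H (γ 1) - H (γ 0) :=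
    intervalIntegral.integral_eq_sub_of_hasDerivAt (fun s _ => hderiv s) hint
  have hγ0 : γ 0 = xc := by simp [hγdef]
  have hγ1 : γ 1 = xh := by simp [hγdef]
  -- pull inner product out of integral
  have hgint : IntervalIntegrable g MeasureTheory.volume 0 1 :=
    hgcont.intervalIntegrable 0 1
  have hpull : ∫ s in (0:ℝ)..1, (inner ℝ (g s) w : ℝ) = (inner ℝ (∫ s in (0:ℝ)..1, g s) w : ℝ) := by
    have := (innerSL ℝ w : E →L[ℝ] ℝ).intervalIntegral_comp_comm hgint
    calc ∫ s in (0:ℝ)..1, (inner ℝ (g s) w : ℝ)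
        = ∫ s in (0:ℝ)..1, (innerSL ℝ w) (g s) := by
          simp_rw [innerSL_apply_apply, real_inner_comm]
      _ = (innerSL ℝ w) (∫ s in (0:ℝ)..1, g s) := this
      _ = (inner ℝ (∫ s in (0:ℝ)..1, g s) w : ℝ) := by rw [innerSL_apply_apply, real_inner_comm]
  set v : E := ∫ s in (0:ℝ)..1, g s with hv
  -- continuous version of toEuclideanLin J
  set L : E →L[ℝ] E := LinearMap.toContinuousLinearMap (Matrix.toEuclideanLin J) with hL
  have hLapp : ∀ x : E, L x = Matrix.toEuclideanLin J x := fun x => rfl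
  -- pull J out of the integral in hstep
  have hJint : ∫ s in (0:ℝ)..1, Matrix.toEuclideanLin J (g s) = L v := by
    have := L.intervalIntegral_comp_comm hgint
    simpa [hLapp] using this
  have hwv : w = (h : ℝ) • L v := by
    rw [hstep]
    congr 1
  -- skew-symmetry : ⟪v, L v⟫ = 0
  have hadj : Matrix.toEuclideanLin J.conjTranspose
      = LinearMap.adjoint (Matrix.toEuclideanLin J) :=
    Matrix.toEuclideanLin_conjTranspose_eq_adjoint J
  have hskew : (inner ℝ v (L v) : ℝ) = 0 := by
    have h1 : (inner ℝ ((Matrix.toEuclideanLin J) v) v : ℝ)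
        = (inner ℝ v ((LinearMap.adjoint (Matrix.toEuclideanLin J)) v) : ℝ) :=
      (LinearMap.adjoint_inner_right (Matrix.toEuclideanLin J) v v).symm
    have h2 : LinearMap.adjoint (Matrix.toEuclideanLin J) = - Matrix.toEuclideanLin J := by
      rw [← hadj]
      have : J.conjTranspose = -J := by
        rw [Matrix.conjTranspose_eq_transpose_of_trivial]; exact hJ
      rw [this, map_neg]
    rw [h2] at h1
    simp only [LinearMap.neg_apply, inner_neg_right] at h1
    have hsymm : (inner ℝ ((Matrix.toEuclideanLin J) v) v : ℝ)
        = (inner ℝ v ((Matrix.toEuclideanLin J) v) : ℝ) := real_inner_comm _ _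
    have h4 : (inner ℝ v ((Matrix.toEuclideanLin J) v) : ℝ) = 0 := by linarith
    rw [hLapp]
    exact h4
  have : H xh - H xc = 0 := by
    rw [← hγ1, ← hγ0, ← hftc, hpull, hwv]
    rw [real_inner_smul_right, hskew, mul_zero]
  linarith
end

section
/- Define F : ℝ² → ℝ² by F(x₁, x₂) = (x₂, −x₁ − |x₁ − 1|/2 + |x₁ + 1|/2), and define V : ℝ → ℝ by V(x) = (1+x)²/2 for x ≤ −1, V(x) = 0 for −1 < x < 1, and V(x) = (1−x)²/2 for x ≥ 1. Let h be a real number and suppose (x̂₁, x̂₂), (x̌₁, x̌₂) ∈ ℝ² satisfy the generalized trapezoidal step relation (x̂₁, x̂₂) − (x̌₁, x̌₂) = h·∫₀¹ F((1−s)·(x̌₁, x̌₂) + s·(x̂₁, x̂₂)) ds. Then V(x̂₁) + x̂₂²/2 = V(x̌₁) + x̌₂²/2, i.e. the step preserves the total energy exactly. -/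
open intervalIntegral

/-! The generalized trapezoidal (average vector field) step conserves every separable energy
`V x₁ + x₂² / 2` with `C¹` potential `V`. Along the segment `γ` from `x̌` to `x̂`, the first
component of the step reads `x̂₁ - x̌₁ = h (x̌₂ + x̂₂) / 2`, the second `x̂₂ - x̌₂ = -h I` with
`I = ∫₀¹ V' (γ₁ s) ds`, and the fundamental theorem of calculus along the segment gives
`(x̂₁ - x̌₁) I = V x̂₁ - V x̌₁`; hence `ΔV + Δ(x₂² / 2) = I (Δx₁ - h (x̌₂ + x̂₂) / 2) = 0`.
The rolling stone potential is `C¹`: it equals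
`x² / 2 + ((x - 1) |x - 1| - (x + 1) |x + 1|) / 4 + 1 / 2`, and `(t |t|)' = 2 |t|`. -/

theorem hasDerivAt_mul_abs (t : ℝ) : HasDerivAt (fun u : ℝ => u * |u|) (2 * |t|) t := by
  rcases eq_or_ne t 0 with rfl | ht
  · rw [hasDerivAt_iff_tendsto_slope_zero]
    refine (continuous_abs.tendsto' 0 (2 * |0|) (by simp)).mono_left nhdsWithin_le_nhds
      |>.congr' ?_
    filter_upwards [self_mem_nhdsWithin] with u (hu : u ≠ 0)
    simp [hu]
  · simpa [self_mul_sign, two_mul] using (hasDerivAt_id' t).fun_mul (hasDerivAt_abs ht)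

theorem intervalIntegral_prodMk {E F : Type*} [NormedAddCommGroup E] [NormedSpace ℝ E]
    [CompleteSpace E] [NormedAddCommGroup F] [NormedSpace ℝ F] [CompleteSpace F]
    {f : ℝ → E} {g : ℝ → F} {a b : ℝ} (hf : IntervalIntegrable f MeasureTheory.volume a b)
    (hg : IntervalIntegrable g MeasureTheory.volume a b) :
    ∫ s in a..b, (f s, g s) = (∫ s in a..b, f s, ∫ s in a..b, g s) :=
  have hfg : IntervalIntegrable (fun s => (f s, g s)) MeasureTheory.volume a b :=
    ⟨hf.1.prodMk hg.1, hf.2.prodMk hg.2⟩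
  Prod.ext ((ContinuousLinearMap.fst ℝ E F).intervalIntegral_comp_comm hfg).symm
    ((ContinuousLinearMap.snd ℝ E F).intervalIntegral_comp_comm hfg).symm

theorem integral_lerp (p q : ℝ) : ∫ s in (0 : ℝ)..1, ((1 - s) * p + s * q) = (p + q) / 2 := by
  rw [integral_add (Continuous.intervalIntegrable (by fun_prop) 0 1)
    (Continuous.intervalIntegrable (by fun_prop) 0 1)]
  simp [integral_comp_sub_left fun x => x]
  ring

theorem hasDerivAt_lerp (a b s : ℝ) : HasDerivAt (fun s => (1 - s) * a + s * b) (b - a) s :=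
  ((((hasDerivAt_id' s).const_sub 1).mul_const a).add ((hasDerivAt_id' s).mul_const b)).congr_deriv
    (by ring)

theorem mul_integral_comp_lerp_of_hasDerivAt {V V' : ℝ → ℝ} (hV : ∀ x, HasDerivAt V (V' x) x)
    (hV' : Continuous V') (a b : ℝ) :
    (b - a) * ∫ s in (0 : ℝ)..1, V' ((1 - s) * a + s * b) = V b - V a := by
  rw [← integral_const_mul, integral_eq_sub_of_hasDerivAt
    (fun s _ => ((hV _).comp s (hasDerivAt_lerp a b s)).congr_deriv (mul_comm _ _))]
  · simp
  · exact (continuous_const.mul (hV'.comp (by fun_prop))).intervalIntegrable 0 1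

theorem energy_eq_of_avf_step {V V' : ℝ → ℝ} (hV : ∀ x, HasDerivAt V (V' x) x)
    (hV' : Continuous V') {F : ℝ × ℝ → ℝ × ℝ} (hF : ∀ x, F x = (x.2, -V' x.1)) {h : ℝ}
    {xc xh : ℝ × ℝ} (hstep : xh - xc = h • ∫ s in (0 : ℝ)..1, F ((1 - s) • xc + s • xh)) :
    V xh.1 + xh.2 ^ 2 / 2 = V xc.1 + xc.2 ^ 2 / 2 := by
  obtain rfl : F = _ := funext hF
  obtain ⟨a, p⟩ := xc
  obtain ⟨b, q⟩ := xh
  simp only [Prod.smul_mk, Prod.mk_add_mk, smul_eq_mul] at hstep ⊢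
  rw [intervalIntegral_prodMk (Continuous.intervalIntegrable (by fun_prop) 0 1)
    (Continuous.intervalIntegrable (by fun_prop) 0 1), integral_lerp, integral_neg] at hstep
  obtain ⟨hx, hy⟩ := Prod.ext_iff.1 hstep
  simp only [Prod.fst_sub, Prod.snd_sub, Prod.smul_fst, Prod.smul_snd, smul_eq_mul] at hx hy
  linear_combination (∫ s in (0 : ℝ)..1, V' ((1 - s) * a + s * b)) * hx + (p + q) / 2 * hy
    - mul_integral_comp_lerp_of_hasDerivAt hV hV' a b

theorem rollingStone_potential_eq {V : ℝ → ℝ}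
    (hV₁ : ∀ x : ℝ, x ≤ -1 → V x = (1 + x) ^ 2 / 2)
    (hV₂ : ∀ x : ℝ, -1 < x → x < 1 → V x = 0)
    (hV₃ : ∀ x : ℝ, 1 ≤ x → V x = (1 - x) ^ 2 / 2) (x : ℝ) :
    V x = x ^ 2 / 2 + ((x - 1) * |x - 1| - (x + 1) * |x + 1|) / 4 + 1 / 2 := by
  rcases le_or_gt x (-1) with hx | hx
  · rw [hV₁ x hx, abs_of_neg (by linarith : x - 1 < 0), abs_of_nonpos (by linarith : x + 1 ≤ 0)]
    ring
  rcases lt_or_ge x 1 with hx' | hx'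
  · rw [hV₂ x hx hx', abs_of_neg (by linarith : x - 1 < 0), abs_of_pos (by linarith : 0 < x + 1)]
    ring
  · rw [hV₃ x hx', abs_of_nonneg (by linarith : 0 ≤ x - 1), abs_of_pos (by linarith : 0 < x + 1)]
    ring

theorem rollingStone_hasDerivAt_potential {V : ℝ → ℝ}
    (hV₁ : ∀ x : ℝ, x ≤ -1 → V x = (1 + x) ^ 2 / 2)
    (hV₂ : ∀ x : ℝ, -1 < x → x < 1 → V x = 0)
    (hV₃ : ∀ x : ℝ, 1 ≤ x → V x = (1 - x) ^ 2 / 2) (x : ℝ) :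
    HasDerivAt V (x + |x - 1| / 2 - |x + 1| / 2) x := by
  rw [funext (rollingStone_potential_eq hV₁ hV₂ hV₃)]
  have hm := (hasDerivAt_mul_abs (x - 1)).comp x ((hasDerivAt_id' x).sub_const 1)
  have hp := (hasDerivAt_mul_abs (x + 1)).comp x ((hasDerivAt_id' x).add_const 1)
  exact ((((hasDerivAt_pow 2 x).div_const 2).add ((hm.sub hp).div_const 4)).add_const _).congr_deriv
    (by ring)

/-- one step of the generalized trapezoidal rule (= AVF step, since the
right-hand side is piecewise linear) for the rolling stone system preserves the total
energy `V(x₁) + x₂²/2` exactly. -/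
theorem stmt_6 (F : ℝ × ℝ → ℝ × ℝ)
    (hF : ∀ x : ℝ × ℝ, F x = (x.2, -x.1 - |x.1 - 1| / 2 + |x.1 + 1| / 2))
    (V : ℝ → ℝ)
    (hV₁ : ∀ x : ℝ, x ≤ -1 → V x = (1 + x) ^ 2 / 2)
    (hV₂ : ∀ x : ℝ, -1 < x → x < 1 → V x = 0)
    (hV₃ : ∀ x : ℝ, 1 ≤ x → V x = (1 - x) ^ 2 / 2)
    (h : ℝ) (xc xh : ℝ × ℝ)
    (hstep : xh - xc = h • ∫ s in (0 : ℝ)..1, F ((1 - s) • xc + s • xh)) :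
    V xh.1 + xh.2 ^ 2 / 2 = V xc.1 + xc.2 ^ 2 / 2 :=
  energy_eq_of_avf_step (rollingStone_hasDerivAt_potential hV₁ hV₂ hV₃) (by fun_prop)
    (fun x => (hF x).trans (Prod.ext rfl (by ring))) hstep
end

section
/- Define x : ℝ → ℝ as the (2π+4)-periodic extension of the function given on [0, 2π+4) by x(t) = 1 + sin(t) for 0 ≤ t ≤ π, x(t) = 1 − (t − π) for π ≤ t < π + 2, x(t) = −1 − sin(2 − t) for π + 2 ≤ t < 2π + 2, and x(t) = t − 3 − 2π for 2π + 2 ≤ t < 2π + 4. Then x is twice differentiable on ℝ and satisfies ẍ(t) = −x(t) − |x(t) − 1|/2 + |x(t) + 1|/2 for all t ∈ ℝ, with initial conditions x(0) = 1 and ẋ(0) = 1; moreover x(t + 2π + 4) = x(t) for all t. -/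
/-!
Shifting by half a period negates the orbit: `x (t + (π + 2)) = -x t`. The force
`y ↦ -y - |y - 1| / 2 + |y + 1| / 2` is odd, so `x`, `ẋ` and the force along `x` are all
`(π + 2)`-antiperiodic, and both derivative identities only need to be checked on `[0, π + 2)`.
There `x = 1 + sin t ≥ 1` on `[0, π]`, where the force is `1 - x = -sin t = ẍ`, and `x` is linear
with slope `-1` on `[π, π + 2]`, where `x ∈ [-1, 1]` and the force vanishes. At the junctions
`0` and `π` the one-sided derivatives agree.
-/

open Real Set Function

theorem forall_of_forall_mem_Ico {α : Type*} [AddCommGroup α] [LinearOrder α]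
    [IsOrderedAddMonoid α] [Archimedean α] {P : α → Prop} {c : α} (hc : 0 < c)
    (hP : ∀ t, P (t + c) ↔ P t) (a : α) (h : ∀ t ∈ Ico a (a + c), P t) (t : α) : P t := by
  obtain ⟨s, hs, hts⟩ := Periodic.exists_mem_Ico (fun t ↦ propext (hP t)) hc t a
  exact hts ▸ h s hs

theorem Function.Antiperiodic.of_periodic_of_mem_Ico {f : ℝ → ℝ} {c : ℝ} (hc : 0 < c)
    (hf : Periodic f (2 * c)) (a : ℝ) (h : ∀ t ∈ Ico a (a + c), f (t + c) = -f t) :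
    Antiperiodic f c :=
  forall_of_forall_mem_Ico hc (fun t ↦ by
    rw [add_assoc, ← two_mul, hf, eq_comm, neg_eq_iff_eq_neg]) a h

section

variable {𝕜 F : Type*} [NontriviallyNormedField 𝕜] [NormedAddCommGroup F] [NormedSpace 𝕜 F]

theorem Function.Antiperiodic.deriv {f : 𝕜 → F} {c : 𝕜} (hf : Antiperiodic f c) :
    Antiperiodic (deriv f) c := fun t ↦ by
  rw [← deriv_comp_add_const, hf.funext, deriv.neg]

theorem Function.Antiperiodic.hasDerivAt_add_iff {f : 𝕜 → F} {c t : 𝕜} {d : F}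
    (hf : Antiperiodic f c) : HasDerivAt f (-d) (t + c) ↔ HasDerivAt f d t := by
  constructor
  · intro h
    simpa only [neg_neg] using (h.comp_add_const t c).neg.congr_of_eventuallyEq
      (.of_forall fun u ↦ by rw [Pi.neg_apply, hf u, neg_neg])
  · intro h
    have h' : HasDerivAt f d (t + c - c) := by rwa [add_sub_cancel_right]
    exact (h'.comp_sub_const (t + c) c).neg.congr_of_eventuallyEq
      (.of_forall fun u ↦ by rw [Pi.neg_apply, hf.sub_eq, neg_neg])

end

section

variable {F : Type*} [NormedAddCommGroup F] [NormedSpace ℝ F]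

theorem Function.Antiperiodic.hasDerivAt_of_mem_Ico {f g : ℝ → F} {c : ℝ} (hc : 0 < c)
    (hf : Antiperiodic f c) (hg : Antiperiodic g c) (a : ℝ)
    (h : ∀ t ∈ Ico a (a + c), HasDerivAt f (g t) t) (t : ℝ) : HasDerivAt f (g t) t :=
  forall_of_forall_mem_Ico hc (fun t ↦ by rw [hg t]; exact hf.hasDerivAt_add_iff) a h t

theorem hasDerivAt_of_eqOn_Ioo {f g : ℝ → F} {a b t : ℝ} {d : F} (ht : t ∈ Ioo a b)
    (hfg : EqOn f g (Ioo a b)) (hg : HasDerivAt g d t) : HasDerivAt f d t :=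
  hg.congr_of_eventuallyEq (hfg.eventuallyEq_of_mem (Ioo_mem_nhds ht.1 ht.2))

theorem hasDerivAt_of_eqOn_Ioc_Ico {f g h : ℝ → F} {a b c : ℝ} {d : F} (hab : a < b)
    (hbc : b < c) (hfg : EqOn f g (Ioc a b)) (hfh : EqOn f h (Ico b c))
    (hg : HasDerivAt g d b) (hh : HasDerivAt h d b) : HasDerivAt f d b := by
  have left : HasDerivWithinAt f d (Iic b) b :=
    hg.hasDerivWithinAt.congr_of_eventuallyEq (hfg.eventuallyEq_of_mem (Ioc_mem_nhdsLE hab))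
      (hfg ⟨hab, le_rfl⟩)
  have right : HasDerivWithinAt f d (Ici b) b :=
    hh.hasDerivWithinAt.congr_of_eventuallyEq (hfh.eventuallyEq_of_mem (Ico_mem_nhdsGE hbc))
      (hfh ⟨le_rfl, hbc⟩)
  simpa only [Iic_union_Ici, hasDerivWithinAt_univ] using left.union right

end

noncomputable def restoringForce (y : ℝ) : ℝ := -y - |y - 1| / 2 + |y + 1| / 2

theorem restoringForce_neg (y : ℝ) : restoringForce (-y) = -restoringForce y := by
  rw [restoringForce, restoringForce, show -y - 1 = -(y + 1) by ring,
    show -y + 1 = -(y - 1) by ring, abs_neg, abs_neg]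
  ring

theorem restoringForce_of_mem_Icc {y : ℝ} (hy : y ∈ Icc (-1) 1) : restoringForce y = 0 := by
  rw [restoringForce, abs_of_nonpos (by linarith [hy.2]), abs_of_nonneg (by linarith [hy.1])]
  ring

theorem restoringForce_of_one_le {y : ℝ} (hy : 1 ≤ y) : restoringForce y = 1 - y := by
  rw [restoringForce, abs_of_nonneg (by linarith), abs_of_nonneg (by linarith)]
  ring

namespace RollingStone

variable {x : ℝ → ℝ} (hsin : EqOn x (fun t ↦ 1 + sin t) (Icc 0 π))
  (hlin : EqOn x (fun t ↦ 1 - (t - π)) (Ico π (π + 2))) (hx : Antiperiodic x (π + 2))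
include hsin hlin hx

theorem eqOn_Ioc : EqOn x (fun t ↦ 1 + t) (Ioc (-2) 0) := by
  intro t ht
  rcases ht.2.lt_or_eq with ht0 | rfl
  · rw [← neg_neg (x t), ← hx t, hlin ⟨by linarith [ht.1], by linarith⟩]
    ring
  · simpa using hsin ⟨le_rfl, pi_pos.le⟩

theorem hasDerivAt_of_mem_Ioc {s : ℝ} (hs : s ∈ Ioc (-2) 0) : HasDerivAt x 1 s := by
  have hline (t : ℝ) : HasDerivAt (fun t ↦ 1 + t) 1 t := (hasDerivAt_id t).const_add 1
  rcases hs.2.lt_or_eq with hs0 | rfl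
  · exact hasDerivAt_of_eqOn_Ioo ⟨hs.1, hs0⟩
      ((eqOn_Ioc hsin hlin hx).mono Ioo_subset_Ioc_self) (hline s)
  · refine hasDerivAt_of_eqOn_Ioc_Ico (by norm_num) pi_pos (eqOn_Ioc hsin hlin hx)
      (hsin.mono Ico_subset_Icc_self) (hline 0) ?_
    simpa using (hasDerivAt_sin 0).const_add 1

theorem hasDerivAt_of_mem_Icc {s : ℝ} (hs : s ∈ Icc 0 π) : HasDerivAt x (cos s) s := by
  rcases hs.1.eq_or_lt with rfl | hs0
  · simpa using hasDerivAt_of_mem_Ioc hsin hlin hx (s := 0) ⟨by norm_num, le_rfl⟩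
  rcases hs.2.lt_or_eq with hsπ | rfl
  · exact hasDerivAt_of_eqOn_Ioo ⟨hs0, hsπ⟩ (hsin.mono Ioo_subset_Icc_self)
      ((hasDerivAt_sin s).const_add 1)
  · refine hasDerivAt_of_eqOn_Ioc_Ico pi_pos (by linarith) (hsin.mono Ioc_subset_Icc_self) hlin
      ((hasDerivAt_sin π).const_add 1) ?_
    simpa using ((hasDerivAt_id π).sub_const π).const_sub 1

theorem hasDerivAt_of_mem_Ico {s : ℝ} (hs : s ∈ Ico π (π + 2)) : HasDerivAt x (-1) s := by
  rcases hs.1.eq_or_lt with rfl | hsπ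
  · simpa using hasDerivAt_of_mem_Icc hsin hlin hx ⟨pi_pos.le, le_rfl⟩
  · exact hasDerivAt_of_eqOn_Ioo ⟨hsπ, hs.2⟩ (hlin.mono Ioo_subset_Ico_self)
      (by simpa using ((hasDerivAt_id s).sub_const π).const_sub 1)

theorem differentiableAt_of_mem_Ico {s : ℝ} (hs : s ∈ Ico 0 (π + 2)) :
    DifferentiableAt ℝ x s := by
  rcases le_or_gt s π with hsπ | hsπ
  · exact (hasDerivAt_of_mem_Icc hsin hlin hx ⟨hs.1, hsπ⟩).differentiableAt
  · exact (hasDerivAt_of_mem_Ico hsin hlin hx ⟨hsπ.le, hs.2⟩).differentiableAt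

theorem hasDerivAt_deriv_of_mem_Icc {s : ℝ} (hs : s ∈ Icc 0 π) :
    HasDerivAt (deriv x) (restoringForce (x s)) s := by
  have hcos : EqOn (deriv x) cos (Icc 0 π) := fun t ht ↦
    (hasDerivAt_of_mem_Icc hsin hlin hx ht).deriv
  rcases hs.1.eq_or_lt with rfl | hs0
  · have hone : EqOn (deriv x) (fun _ ↦ 1) (Ioc (-2) 0) := fun t ht ↦
      (hasDerivAt_of_mem_Ioc hsin hlin hx ht).deriv
    rw [show x 0 = 1 by simpa using hsin ⟨le_rfl, pi_pos.le⟩, restoringForce_of_one_le le_rfl,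
      sub_self]
    exact hasDerivAt_of_eqOn_Ioc_Ico (by norm_num) pi_pos hone (hcos.mono Ico_subset_Icc_self)
      (hasDerivAt_const 0 1) (by simpa using hasDerivAt_cos 0)
  rcases hs.2.lt_or_eq with hsπ | rfl
  · rw [hsin hs, restoringForce_of_one_le (by linarith [sin_nonneg_of_nonneg_of_le_pi hs.1 hs.2])]
    exact hasDerivAt_of_eqOn_Ioo ⟨hs0, hsπ⟩ (hcos.mono Ioo_subset_Icc_self)
      (by simpa using hasDerivAt_cos s)
  · have hneg : EqOn (deriv x) (fun _ ↦ -1) (Ico π (π + 2)) := fun t ht ↦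
      (hasDerivAt_of_mem_Ico hsin hlin hx ht).deriv
    rw [show x π = 1 by simpa using hsin ⟨pi_pos.le, le_rfl⟩, restoringForce_of_one_le le_rfl,
      sub_self]
    exact hasDerivAt_of_eqOn_Ioc_Ico pi_pos (by linarith) (hcos.mono Ioc_subset_Icc_self) hneg
      (by simpa using hasDerivAt_cos π) (hasDerivAt_const π (-1))

theorem hasDerivAt_deriv_of_mem_Ico {s : ℝ} (hs : s ∈ Ico 0 (π + 2)) :
    HasDerivAt (deriv x) (restoringForce (x s)) s := by
  rcases le_or_gt s π with hsπ | hsπ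
  · exact hasDerivAt_deriv_of_mem_Icc hsin hlin hx ⟨hs.1, hsπ⟩
  have hneg : EqOn (deriv x) (fun _ ↦ -1) (Ioo π (π + 2)) := fun t ht ↦
    (hasDerivAt_of_mem_Ico hsin hlin hx (Ioo_subset_Ico_self ht)).deriv
  rw [hlin ⟨hsπ.le, hs.2⟩, restoringForce_of_mem_Icc ⟨by linarith [hs.2], by linarith⟩]
  exact hasDerivAt_of_eqOn_Ioo ⟨hsπ, hs.2⟩ hneg (hasDerivAt_const s (-1))

end RollingStone

/-- the (2π+4)-periodic piecewise defined function `x` is twice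
differentiable and solves the rolling stone equation
`ẍ = −x − |x−1|/2 + |x+1|/2` with `x(0) = 1`, `ẋ(0) = 1`. -/
theorem stmt_8 (x : ℝ → ℝ)
    (h₁ : ∀ t : ℝ, 0 ≤ t → t ≤ π → x t = 1 + Real.sin t)
    (h₂ : ∀ t : ℝ, π ≤ t → t < π + 2 → x t = 1 - (t - π))
    (h₃ : ∀ t : ℝ, π + 2 ≤ t → t < 2 * π + 2 → x t = -1 - Real.sin (2 - t))
    (h₄ : ∀ t : ℝ, 2 * π + 2 ≤ t → t < 2 * π + 4 → x t = t - 3 - 2 * π)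
    (hper : ∀ t : ℝ, x (t + (2 * π + 4)) = x t) :
    ∃ x' : ℝ → ℝ,
      (∀ t : ℝ, HasDerivAt x (x' t) t) ∧
      (∀ t : ℝ, HasDerivAt x' (-(x t) - |x t - 1| / 2 + |x t + 1| / 2) t) ∧
      x 0 = 1 ∧ x' 0 = 1 ∧
      (∀ t : ℝ, x (t + (2 * π + 4)) = x t) := by
  have hc : (0 : ℝ) < π + 2 := by positivity
  have hsin : EqOn x (fun t ↦ 1 + sin t) (Icc 0 π) := fun t ht ↦ h₁ t ht.1 ht.2
  have hlin : EqOn x (fun t ↦ 1 - (t - π)) (Ico π (π + 2)) := fun t ht ↦ h₂ t ht.1 ht.2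
  have hx : Antiperiodic x (π + 2) := by
    refine .of_periodic_of_mem_Ico hc (fun t ↦ by rw [← hper t]; ring_nf) 0 fun t ht ↦ ?_
    rcases lt_or_ge t π with htπ | htπ
    · rw [h₃ _ (by linarith [ht.1]) (by linarith), h₁ t ht.1 htπ.le,
        show 2 - (t + (π + 2)) = -(t + π) by ring, sin_neg, sin_add_pi]
      ring
    · rw [h₄ _ (by linarith) (by linarith [ht.2]), h₂ t htπ (by linarith [ht.2])]
      ring
  have hF : Antiperiodic (fun t ↦ restoringForce (x t)) (π + 2) := fun t ↦ by
    simp only [hx t, restoringForce_neg]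
  refine ⟨deriv x, hx.hasDerivAt_of_mem_Ico hc hx.deriv 0 ?_,
    hx.deriv.hasDerivAt_of_mem_Ico hc hF 0 ?_, by simpa using hsin ⟨le_rfl, pi_pos.le⟩,
    by simpa using (RollingStone.hasDerivAt_of_mem_Icc hsin hlin hx ⟨le_rfl, pi_pos.le⟩).deriv,
    hper⟩
  · exact fun s hs ↦
      (RollingStone.differentiableAt_of_mem_Ico hsin hlin hx (by simpa using hs)).hasDerivAt
  · exact fun s hs ↦ RollingStone.hasDerivAt_deriv_of_mem_Ico hsin hlin hx (by simpa using hs)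
end

section
/- Let ℓ > 0, let y : [0, ℓ] → ℝⁿ be differentiable with derivative y' that is Lipschitz continuous with constant L ≥ 0, and let p : [0, ℓ] → ℝⁿ be the quadratic polynomial p(t) = ((y'(ℓ) − y'(0))/(2ℓ))·t² + y'(0)·t + y(0), which satisfies p(0) = y(0), p'(0) = y'(0), and p'(ℓ) = y'(ℓ). Then ‖y(t) − p(t)‖ ≤ L·t² for all t ∈ [0, ℓ]; in particular the interpolation error on the whole interval is at most L·ℓ². -/
/-!
On `[0, ℓ]` the derivative of `y - p` is `y'(t) - y'(0) - (t/ℓ)(y'(ℓ) - y'(0))`, and by the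
Lipschitz bound each of the two differences has norm at most `L t`. So `y - p` vanishes at `0`
and has derivative of norm at most `2 L t`, and comparison with `L t²` gives the error bound.
-/

open Set

variable {E : Type*} [NormedAddCommGroup E] [NormedSpace ℝ E]

theorem hasDerivAt_quadratic (l : ℝ) (v a c : E) (x : ℝ) :
    HasDerivAt (fun t : ℝ => (t ^ 2 / (2 * l)) • v + t • a + c) ((x / l) • v + a) x := by
  have hcoeff : HasDerivAt (fun t : ℝ => t ^ 2 / (2 * l)) (x / l) x :=
    ((hasDerivAt_pow 2 x).div_const (2 * l)).congr_deriv (by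
      norm_num [mul_div_mul_left x l (two_ne_zero' ℝ)])
  simpa using ((hcoeff.smul_const v).add ((hasDerivAt_id x).smul_const a)).add_const c

theorem norm_sub_linearInterp_deriv_le {l L : ℝ} (hl : 0 < l) {y' : ℝ → E}
    (hlip : ∀ t ∈ Icc (0 : ℝ) l, ∀ t' ∈ Icc (0 : ℝ) l, ‖y' t - y' t'‖ ≤ L * |t - t'|)
    {x : ℝ} (hx : x ∈ Icc 0 l) :
    ‖y' x - ((x / l) • (y' l - y' 0) + y' 0)‖ ≤ 2 * L * x := by
  have h0 : (0 : ℝ) ∈ Icc 0 l := ⟨le_rfl, hl.le⟩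
  have hxl : 0 ≤ x / l := div_nonneg hx.1 hl.le
  have hx0 : ‖y' x - y' 0‖ ≤ L * x := by
    simpa [abs_of_nonneg hx.1] using hlip x hx 0 h0
  have hl0 : ‖y' l - y' 0‖ ≤ L * l := by
    simpa [abs_of_nonneg hl.le] using hlip l ⟨hl.le, le_rfl⟩ 0 h0
  calc ‖y' x - ((x / l) • (y' l - y' 0) + y' 0)‖
      = ‖(y' x - y' 0) - (x / l) • (y' l - y' 0)‖ := by congr 1; abel
    _ ≤ ‖y' x - y' 0‖ + ‖(x / l) • (y' l - y' 0)‖ := norm_sub_le _ _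
    _ = ‖y' x - y' 0‖ + x / l * ‖y' l - y' 0‖ := by rw [norm_smul, Real.norm_of_nonneg hxl]
    _ ≤ L * x + x / l * (L * l) := by gcongr
    _ = 2 * L * x := by field_simp; ring

theorem norm_sub_quadraticInterp_le {l L : ℝ} (hl : 0 < l) {y y' : ℝ → E}
    (hderiv : ∀ t ∈ Icc (0 : ℝ) l, HasDerivWithinAt y (y' t) (Icc (0 : ℝ) l) t)
    (hlip : ∀ t ∈ Icc (0 : ℝ) l, ∀ t' ∈ Icc (0 : ℝ) l, ‖y' t - y' t'‖ ≤ L * |t - t'|)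
    {t : ℝ} (ht : t ∈ Icc 0 l) :
    ‖y t - ((t ^ 2 / (2 * l)) • (y' l - y' 0) + t • y' 0 + y 0)‖ ≤ L * t ^ 2 := by
  have hp := hasDerivAt_quadratic l (y' l - y' 0) (y' 0) (y 0)
  have hycont : ContinuousOn y (Icc 0 l) := fun t ht => (hderiv t ht).continuousWithinAt
  have hcont : ContinuousOn (fun t => y t - ((t ^ 2 / (2 * l)) • (y' l - y' 0) + t • y' 0 + y 0))
      (Icc 0 l) :=
    hycont.sub fun t _ => (hp t).continuousAt.continuousWithinAt
  have hderiv_right : ∀ x ∈ Ico (0 : ℝ) l,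
      HasDerivWithinAt (fun t => y t - ((t ^ 2 / (2 * l)) • (y' l - y' 0) + t • y' 0 + y 0))
        (y' x - ((x / l) • (y' l - y' 0) + y' 0)) (Ici x) x := fun x hx =>
    ((hderiv x (Ico_subset_Icc_self hx)).mono_of_mem_nhdsWithin
      (Icc_mem_nhdsGE_of_mem hx)).sub (hp x).hasDerivWithinAt
  have hbound : ∀ x : ℝ, HasDerivAt (fun t => L * t ^ 2) (2 * L * x) x := fun x =>
    ((hasDerivAt_pow 2 x).const_mul L).congr_deriv (by simp; ring)
  refine image_norm_le_of_norm_deriv_right_le_deriv_boundary hcont hderiv_right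
    (by simp) hbound (fun x hx => ?_) ht
  exact norm_sub_linearInterp_deriv_le hl hlip (Ico_subset_Icc_self hx)

/-- the quadratic interpolant matching the value at the left endpoint and
the slopes at both endpoints approximates a `C^{1,1}` curve with error at most `L·t²`,
hence at most `L·ℓ²` on the whole interval. -/
theorem stmt_12 (n : ℕ) (l : ℝ) (hl : 0 < l) (L : ℝ) (hL : 0 ≤ L)
    (y y' : ℝ → (Fin n → ℝ))
    (hderiv : ∀ t ∈ Icc (0 : ℝ) l, HasDerivWithinAt y (y' t) (Icc (0 : ℝ) l) t)
    (hlip : ∀ t ∈ Icc (0 : ℝ) l, ∀ t' ∈ Icc (0 : ℝ) l,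
      ‖y' t - y' t'‖ ≤ L * |t - t'|)
    (p : ℝ → (Fin n → ℝ))
    (hp : ∀ t : ℝ, p t = (t ^ 2 / (2 * l)) • (y' l - y' 0) + t • y' 0 + y 0) :
    p 0 = y 0 ∧ HasDerivAt p (y' 0) 0 ∧ HasDerivAt p (y' l) l ∧
      ∀ t ∈ Icc (0 : ℝ) l, ‖y t - p t‖ ≤ L * t ^ 2 ∧ ‖y t - p t‖ ≤ L * l ^ 2 := by
  obtain rfl : p = fun t => (t ^ 2 / (2 * l)) • (y' l - y' 0) + t • y' 0 + y 0 := funext hp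
  have hp' := hasDerivAt_quadratic l (y' l - y' 0) (y' 0) (y 0)
  refine ⟨by simp, by simpa using hp' 0, ?_, fun t ht => ?_⟩
  · simpa [div_self hl.ne'] using hp' l
  have herr := norm_sub_quadraticInterp_le hl hderiv hlip ht
  refine ⟨herr, herr.trans ?_⟩
  gcongr
  exacts [ht.1, ht.2]
end
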